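/- Define y_t^1 = x_t^1 and y_t^s = (x_t^s − √(1−γ̄_t)·x_t^{s−1})/√γ̄_t for 1 < s ≤ S, where x_t^s follows the DyDiff forward process. Then y_t^s = √ᾱ_t·x_0^s + √(1−ᾱ_t)·ε_t^s, and the random vectors y_t^2, ..., y_t^S, x_t^1 are mutually independent Gaussians. -/

import Mathlib

open MeasureTheory ProbabilityTheory

/-- The standard Gaussian measure `N(0, I)` on `ℝ^d`. -/
noncomputable def stdGaussian (d : ℕ) : Measure (Fin d → ℝ) :=
  Measure.pi fun _ => gaussianReal 0 1

/-- The isotropic Gaussian measure `N(μ, v·I)` on `ℝ^d`. -/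
noncomputable def gaussIso (d : ℕ) (μ : Fin d → ℝ) (v : ℝ) : Measure (Fin d → ℝ) :=
  (stdGaussian d).map fun x => μ + Real.sqrt v • x

open Real
open scoped NNReal ENNReal

lemma gauss_pdf_conv (v w : ℝ≥0) (hv : v ≠ 0) (hw : w ≠ 0) (z : ℝ) :
    ∫ x : ℝ, gaussianPDFReal 0 v x * gaussianPDFReal x w z
      = gaussianPDFReal 0 (v + w) z := by
  have hV : (0:ℝ) < v := by exact_mod_cast pos_iff_ne_zero.2 hv
  have hW : (0:ℝ) < w := by exact_mod_cast pos_iff_ne_zero.2 hw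
  set V : ℝ := (v : ℝ)
  set W : ℝ := (w : ℝ)
  have hVW : (0:ℝ) < V + W := by linarith
  set B : ℝ := (V + W) / (2 * V * W) with hB
  have hB0 : 0 < B := by positivity
  set D : ℝ := V * z / (V + W) with hD
  set C : ℝ := (Real.sqrt (2 * π * V))⁻¹ * (Real.sqrt (2 * π * W))⁻¹
      * Real.exp (-z ^ 2 / (2 * (V + W))) with hC
  have hpt : ∀ x : ℝ, gaussianPDFReal 0 v x * gaussianPDFReal x w z
      = C * Real.exp (-B * (x - D) ^ 2) := by
    intro x
    unfold gaussianPDFReal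
    rw [hC]
    have hexp : Real.exp (-(x - 0) ^ 2 / (2 * V)) * Real.exp (-(z - x) ^ 2 / (2 * W))
        = Real.exp (-z ^ 2 / (2 * (V + W))) * Real.exp (-B * (x - D) ^ 2) := by
      rw [← Real.exp_add, ← Real.exp_add]
      congr 1
      rw [hB, hD]
      field_simp
      ring
    calc (Real.sqrt (2 * π * V))⁻¹ * Real.exp (-(x - 0) ^ 2 / (2 * V)) *
        ((Real.sqrt (2 * π * W))⁻¹ * Real.exp (-(z - x) ^ 2 / (2 * W)))
        = (Real.sqrt (2 * π * V))⁻¹ * (Real.sqrt (2 * π * W))⁻¹ *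
        (Real.exp (-(x - 0) ^ 2 / (2 * V)) * Real.exp (-(z - x) ^ 2 / (2 * W))) := by ring
      _ = (Real.sqrt (2 * π * V))⁻¹ * (Real.sqrt (2 * π * W))⁻¹ *
        (Real.exp (-z ^ 2 / (2 * (V + W))) * Real.exp (-B * (x - D) ^ 2)) := by rw [hexp]
      _ = _ := by ring
  rw [funext hpt, MeasureTheory.integral_const_mul _ _]
  have : ∫ x : ℝ, Real.exp (-B * (x - D) ^ 2) = Real.sqrt (π / B) := by
    rw [show (fun x : ℝ => Real.exp (-B * (x - D) ^ 2))
        = fun x : ℝ => (fun y : ℝ => Real.exp (-B * y ^ 2)) (x - D) from rfl]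
    rw [integral_sub_right_eq_self (μ := volume) (fun y : ℝ => Real.exp (-B * y ^ 2)) D]
    exact integral_gaussian B
  rw [this]
  unfold gaussianPDFReal
  rw [hC]
  have hcoe : ((v + w : ℝ≥0) : ℝ) = V + W := by push_cast; ring
  rw [hcoe]
  rw [show π / B = 2 * π * V * (2 * π * W) / (2 * π * (V + W)) by rw [hB]; field_simp]
  rw [Real.sqrt_div (by positivity) _, Real.sqrt_mul (by positivity)]
  rw [show -(z - 0) ^ 2 / (2 * (V + W)) = -z ^ 2 / (2 * (V + W)) by ring_nf]
  have h1 : Real.sqrt (2 * π * V) ≠ 0 := by positivity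
  have h2 : Real.sqrt (2 * π * W) ≠ 0 := by positivity
  have h3 : Real.sqrt (2 * π * (V + W)) ≠ 0 := by positivity
  field_simp
  rw [← Real.sqrt_mul (by positivity : (0:ℝ) ≤ 2 * π) V, ← Real.sqrt_mul (by positivity : (0:ℝ) ≤ 2 * π * V)]
  congr 1
  ring

lemma gauss_pdf_conv_integrable (v w : ℝ≥0) (hv : v ≠ 0) (hw : w ≠ 0) (z : ℝ) :
    Integrable (fun x : ℝ => gaussianPDFReal 0 v x * gaussianPDFReal x w z) := by
  have hV : (0:ℝ) < v := by exact_mod_cast pos_iff_ne_zero.2 hv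
  have hg : Integrable (fun x : ℝ => (Real.sqrt (2 * π * (v:ℝ)))⁻¹ * (Real.sqrt (2 * π * (w:ℝ)))⁻¹
      * Real.exp (-(1/(2*(v:ℝ))) * x ^ 2)) :=
    (integrable_exp_neg_mul_sq (by positivity)).const_mul _
  refine hg.mono ?_ (ae_of_all _ fun x => ?_)
  · unfold gaussianPDFReal
    exact (Measurable.mul (by fun_prop) (by fun_prop)).aestronglyMeasurable
  · unfold gaussianPDFReal
    have h1 : Real.exp (-(z - x) ^ 2 / (2 * (w:ℝ))) ≤ 1 := by
      rw [Real.exp_le_one_iff, neg_div]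
      exact neg_nonpos.2 (by positivity)
    have h2 : -(x - 0) ^ 2 / (2 * (v:ℝ)) = -(1/(2*(v:ℝ))) * x ^ 2 := by field_simp; ring
    rw [Real.norm_eq_abs, Real.norm_eq_abs, abs_of_nonneg (by positivity), abs_of_nonneg (by positivity)]
    calc (Real.sqrt (2 * π * (v:ℝ)))⁻¹ * Real.exp (-(x - 0) ^ 2 / (2 * (v:ℝ))) *
          ((Real.sqrt (2 * π * (w:ℝ)))⁻¹ * Real.exp (-(z - x) ^ 2 / (2 * (w:ℝ))))
        ≤ (Real.sqrt (2 * π * (v:ℝ)))⁻¹ * Real.exp (-(x - 0) ^ 2 / (2 * (v:ℝ))) *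
          ((Real.sqrt (2 * π * (w:ℝ)))⁻¹ * 1) := by
          gcongr
      _ = (Real.sqrt (2 * π * (v:ℝ)))⁻¹ * (Real.sqrt (2 * π * (w:ℝ)))⁻¹
          * Real.exp (-(1/(2*(v:ℝ))) * x ^ 2) := by rw [← h2]; ring

lemma measurable_pdf2 (w : ℝ≥0) :
    Measurable (fun q : ℝ × ℝ => gaussianPDF q.1 w q.2) := by
  unfold gaussianPDF gaussianPDFReal
  exact Measurable.ennreal_ofReal <| by fun_prop

lemma gauss_conv_centered (v w : ℝ≥0) :
    ((gaussianReal 0 v).prod (gaussianReal 0 w)).map (fun p : ℝ × ℝ => p.1 + p.2)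
      = gaussianReal 0 (v + w) := by
  by_cases hv : v = 0
  · subst hv
    rw [gaussianReal_zero_var, Measure.dirac_prod, Measure.map_map measurable_add (measurable_prodMk_left : Measurable (Prod.mk (0:ℝ)))]
    simp only [zero_add]
    exact (Measure.map_congr (by filter_upwards with y; simp)).trans (Measure.map_id)
  by_cases hw : w = 0
  · subst hw
    rw [gaussianReal_zero_var, Measure.prod_dirac, Measure.map_map measurable_add (measurable_prodMk_right : Measurable fun x : ℝ => (x, (0:ℝ)))]
    rw [add_zero]
    exact (Measure.map_congr (by filter_upwards with y; simp)).trans (Measure.map_id)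
  have hvw : v + w ≠ 0 := by positivity
  ext s hs
  rw [Measure.map_apply measurable_add hs, Measure.prod_apply (measurable_add hs)]
  have hslice : ∀ x : ℝ, (gaussianReal 0 w) (Prod.mk x ⁻¹' ((fun p : ℝ × ℝ => p.1 + p.2) ⁻¹' s))
      = ∫⁻ z in s, gaussianPDF x w z := by
    intro x
    have h1 : Prod.mk x ⁻¹' ((fun p : ℝ × ℝ => p.1 + p.2) ⁻¹' s) = (fun y => x + y) ⁻¹' s := rfl
    rw [h1, ← Measure.map_apply (measurable_const_add x) hs, gaussianReal_map_const_add,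
      zero_add, gaussianReal_apply _ hw]
  simp_rw [hslice]
  have hFmeas : Measurable (fun x : ℝ => ∫⁻ z in s, gaussianPDF x w z) :=
    (measurable_pdf2 w).lintegral_prod_right'
  rw [gaussianReal_of_var_ne_zero 0 hv,
    lintegral_withDensity_eq_lintegral_mul _ (measurable_gaussianPDF 0 v) hFmeas]
  have hswap : ∫⁻ x, (gaussianPDF 0 v * fun x => ∫⁻ z in s, gaussianPDF x w z) x
      = ∫⁻ z in s, ∫⁻ x, gaussianPDF 0 v x * gaussianPDF x w z := by
    simp only [Pi.mul_apply]
    rw [← lintegral_lintegral_swap]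
    · congr 1
      ext x
      rw [lintegral_const_mul _ (measurable_gaussianPDF x w)]
    · exact ((measurable_gaussianPDF 0 v).comp measurable_fst |>.mul (measurable_pdf2 w)).aemeasurable
  rw [hswap, gaussianReal_apply _ hvw]
  congr 1
  ext z
  have key : ∫⁻ x, gaussianPDF 0 v x * gaussianPDF x w z = gaussianPDF 0 (v + w) z := by
    unfold gaussianPDF
    have : ∀ x, ENNReal.ofReal (gaussianPDFReal 0 v x) * ENNReal.ofReal (gaussianPDFReal x w z)
        = ENNReal.ofReal (gaussianPDFReal 0 v x * gaussianPDFReal x w z) :=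
      fun x => (ENNReal.ofReal_mul (gaussianPDFReal_nonneg 0 v x)).symm
    simp_rw [this]
    rw [← ofReal_integral_eq_lintegral_ofReal (gauss_pdf_conv_integrable v w hv hw z)
      (ae_of_all _ fun x => mul_nonneg (gaussianPDFReal_nonneg _ _ _) (gaussianPDFReal_nonneg _ _ _))]
    rw [gauss_pdf_conv v w hv hw z]
  rw [key]

lemma gauss_conv (a b : ℝ) (v w : ℝ≥0) :
    ((gaussianReal a v).prod (gaussianReal b w)).map (fun p : ℝ × ℝ => p.1 + p.2)
      = gaussianReal (a + b) (v + w) := by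
  have ha : gaussianReal a v = (gaussianReal 0 v).map (a + ·) := by
    rw [gaussianReal_map_const_add, zero_add]
  have hb : gaussianReal b w = (gaussianReal 0 w).map (b + ·) := by
    rw [gaussianReal_map_const_add, zero_add]
  rw [ha, hb, Measure.map_prod_map _ _ (measurable_const_add a) (measurable_const_add b),
    Measure.map_map measurable_add (measurable_const_add a |>.prodMap (measurable_const_add b))]
  have : ((fun p : ℝ × ℝ => p.1 + p.2) ∘ Prod.map (a + ·) (b + ·))
      = ((a + b) + ·) ∘ (fun p : ℝ × ℝ => p.1 + p.2) := by
    funext p; simp [Prod.map]; ring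
  rw [this, ← Measure.map_map (measurable_const_add (a+b)) measurable_add,
    gauss_conv_centered, gaussianReal_map_const_add, zero_add]

lemma gaussIso_eq_pi (d : ℕ) (m : Fin d → ℝ) (v : ℝ) (hv : 0 ≤ v) :
    gaussIso d m v = Measure.pi (fun i => gaussianReal (m i) v.toNNReal) := by
  have hcomp : ∀ i : Fin d, MeasurePreserving (fun t : ℝ => m i + Real.sqrt v * t)
      (gaussianReal 0 1) (gaussianReal (m i) v.toNNReal) := by
    intro i
    refine ⟨by fun_prop, ?_⟩
    have h1 : (fun t : ℝ => m i + Real.sqrt v * t) = (m i + ·) ∘ (Real.sqrt v * ·) := rfl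
    rw [h1, ← Measure.map_map (measurable_const_add _) (measurable_const_mul _),
      gaussianReal_map_const_mul, gaussianReal_map_const_add]
    congr 1
    · simp
    · ext
      simp [Real.sq_sqrt hv, Real.coe_toNNReal v hv]
  have := (measurePreserving_pi (fun _ : Fin d => gaussianReal 0 1)
    (fun i => gaussianReal (m i) v.toNNReal) hcomp).map_eq
  rw [gaussIso, _root_.stdGaussian, ← this]
  rfl

lemma map_add_gauss {Ω : Type*} [MeasurableSpace Ω] (P : Measure Ω) [IsProbabilityMeasure P]
    {d : ℕ} {X Y : Ω → Fin d → ℝ} (hX : Measurable X) (hY : Measurable Y)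
    (hXY : IndepFun X Y P) {mx my : Fin d → ℝ} {v w : ℝ} (hv : 0 ≤ v) (hw : 0 ≤ w)
    (hmX : P.map X = gaussIso d mx v) (hmY : P.map Y = gaussIso d my w) :
    P.map (fun ω => X ω + Y ω) = gaussIso d (mx + my) (v + w) := by
  have hpair : P.map (fun ω => (X ω, Y ω)) = (P.map X).prod (P.map Y) :=
    (indepFun_iff_map_prod_eq_prod_map_map hX.aemeasurable hY.aemeasurable).1 hXY
  have h1 : P.map (fun ω => X ω + Y ω)
      = (P.map (fun ω => (X ω, Y ω))).map (fun p : (Fin d → ℝ) × (Fin d → ℝ) => p.1 + p.2) := by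
    rw [Measure.map_map measurable_add (hX.prodMk hY)]
    rfl
  rw [h1, hpair, hmX, hmY, gaussIso_eq_pi d mx v hv, gaussIso_eq_pi d my w hw,
    gaussIso_eq_pi d (mx + my) (v + w) (by linarith)]
  rw [← (measurePreserving_arrowProdEquivProdArrow ℝ ℝ (Fin d)
    (fun i => gaussianReal (mx i) v.toNNReal) (fun i => gaussianReal (my i) w.toNNReal)).map_eq,
    Measure.map_map measurable_add (MeasurableEquiv.arrowProdEquivProdArrow ℝ ℝ (Fin d)).measurable]
  have h2 : ((fun p : (Fin d → ℝ) × (Fin d → ℝ) => p.1 + p.2)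
      ∘ (MeasurableEquiv.arrowProdEquivProdArrow ℝ ℝ (Fin d)))
      = fun (f : Fin d → ℝ × ℝ) (i : Fin d) => (fun p : ℝ × ℝ => p.1 + p.2) (f i) := by
    funext f; funext i; rfl
  rw [h2]
  rw [(measurePreserving_pi _ (fun i => gaussianReal (mx i + my i) (v.toNNReal + w.toNNReal))
    (fun i => ⟨measurable_add, gauss_conv (mx i) (my i) v.toNNReal w.toNNReal⟩)).map_eq]
  congr 1
  funext i
  rw [Real.toNNReal_add hv hw]
  rfl

lemma measurable_ext_fun {γ : Type*} [MeasurableSpace γ] [Inhabited γ] (U : Finset ℕ) :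
    Measurable (fun (v : (_ : ↥U) → γ) (j : ℕ) =>
      if h : j ∈ U then v ⟨j, h⟩ else default) := by
  apply measurable_pi_lambda
  intro j
  by_cases h : j ∈ U
  · simp only [h, dif_pos]
    exact measurable_pi_apply _
  · simp only [h, dif_neg, not_false_iff]
    exact measurable_const

lemma iIndepFun_blocks {Ω : Type*} [MeasurableSpace Ω] (P : Measure Ω) [IsProbabilityMeasure P]
    {γ δ : Type*} [MeasurableSpace γ] [Inhabited γ] [MeasurableSpace δ]
    (ε : ℕ → Ω → γ) (hmeas : ∀ i, Measurable (ε i))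
    (hind : iIndepFun ε P)
    {S : ℕ} (B : Fin S → Finset ℕ) (hB : Pairwise (Function.onFun Disjoint B))
    (g : ∀ _k : Fin S, (ℕ → γ) → δ) (hg : ∀ k, Measurable (g k))
    (hdep : ∀ k (e e' : ℕ → γ), (∀ j ∈ B k, e j = e' j) → g k e = g k e') :
    iIndepFun (fun k ω => g k (fun j => ε j ω)) P := by
  classical
  rw [iIndepFun_iff_measure_inter_preimage_eq_mul]
  intro s
  induction s using Finset.induction_on with
  | empty => intro sets _; simp
  | @insert k s hk ih =>
    intro sets hsets
    rw [Finset.set_biInter_insert, Finset.prod_insert hk,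
      ← ih (fun i hi => hsets i (Finset.mem_insert_of_mem hi))]
    set U : Finset ℕ := s.biUnion B with hU
    have hdisj : Disjoint (B k) U := by
      rw [hU, Finset.disjoint_biUnion_right]
      intro i hi
      exact hB (fun h => hk (h ▸ hi))
    have hIndep2 : IndepFun (fun ω (j : ↥(B k)) => ε j ω) (fun ω (j : ↥U) => ε j ω) P :=
      hind.indepFun_finset (B k) U hdisj hmeas
    -- express the events as preimages of the tuple maps
    set extk : ((_ : ↥(B k)) → γ) → ℕ → γ :=
      fun v j => if h : j ∈ B k then v ⟨j, h⟩ else default with hextk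
    set extU : ((_ : ↥U) → γ) → ℕ → γ :=
      fun v j => if h : j ∈ U then v ⟨j, h⟩ else default with hextU
    have hAk : ((fun ω => g k (fun j => ε j ω)) ⁻¹' sets k)
        = (fun ω (j : ↥(B k)) => ε j ω) ⁻¹' ((fun v => g k (extk v)) ⁻¹' sets k) := by
      ext ω
      simp only [Set.mem_preimage]
      rw [hdep k (fun j => ε j ω) (extk (fun j : ↥(B k) => ε j ω))
        (fun j hj => by simp [hextk, hj])]
    have hBs : (⋂ i ∈ s, (fun ω => g i (fun j => ε j ω)) ⁻¹' sets i)
        = (fun ω (j : ↥U) => ε j ω) ⁻¹'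
          (⋂ i ∈ s, (fun v => g i (extU v)) ⁻¹' sets i) := by
      ext ω
      simp only [Set.mem_preimage, Set.mem_iInter]
      refine forall₂_congr fun i hi => ?_
      rw [hdep i (fun j => ε j ω) (extU (fun j : ↥U => ε j ω))
        (fun j hj => by have hjU : j ∈ U := Finset.mem_biUnion.2 ⟨i, hi, hj⟩; simp [hextU, hjU])]
    have hCmeas : MeasurableSet ((fun v => g k (extk v)) ⁻¹' sets k) :=
      ((hg k).comp (measurable_ext_fun (B k))) (hsets k (Finset.mem_insert_self k s))
    have hDmeas : MeasurableSet (⋂ i ∈ s, (fun v => g i (extU v)) ⁻¹' sets i) :=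
      MeasurableSet.biInter s.countable_toSet fun i hi =>
        ((hg i).comp (measurable_ext_fun U)) (hsets i (Finset.mem_insert_of_mem hi))
    have hkey := (indepFun_iff_measure_inter_preimage_eq_mul.1 hIndep2)
      ((fun v => g k (extk v)) ⁻¹' sets k) (⋂ i ∈ s, (fun v => g i (extU v)) ⁻¹' sets i)
      hCmeas hDmeas
    rw [hAk, hBs, hkey, ← hAk, ← hBs]

noncomputable def Xdet (d : ℕ) (a g : ℝ) (x0 : ℕ → Fin d → ℝ) :
    ℕ → (ℕ → Fin d → ℝ) → Fin d → ℝ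
  | 0, e => Real.sqrt a • x0 0 + Real.sqrt (1 - a) • e 0
  | n+1, e => Real.sqrt g • (Real.sqrt a • x0 (n+1) + Real.sqrt (1-a) • e (n+1))
      + Real.sqrt (1-g) • Xdet d a g x0 n e

lemma Xdet_measurable (d : ℕ) (a g : ℝ) (x0 : ℕ → Fin d → ℝ) (n : ℕ) :
    Measurable (Xdet d a g x0 n) := by
  induction n with
  | zero =>
    simp only [Xdet]
    fun_prop
  | succ n ih =>
    simp only [Xdet]
    fun_prop

lemma Xdet_dep (d : ℕ) (a g : ℝ) (x0 : ℕ → Fin d → ℝ) (n : ℕ) (e e' : ℕ → Fin d → ℝ)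
    (h : ∀ j, j ≤ n → e j = e' j) : Xdet d a g x0 n e = Xdet d a g x0 n e' := by
  induction n with
  | zero => simp [Xdet, h 0 le_rfl]
  | succ n ih =>
    simp only [Xdet, h (n+1) le_rfl, ih (fun j hj => h j (hj.trans (Nat.le_succ n)))]

lemma map_smul_gauss {Ω : Type*} [MeasurableSpace Ω] (P : Measure Ω)
    {d : ℕ} {Z : Ω → Fin d → ℝ} (hZ : Measurable Z) {r v : ℝ} (hr : 0 ≤ r) (hv : 0 ≤ v)
    {m : Fin d → ℝ} (h : P.map Z = gaussIso d m v) :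
    P.map (fun ω => r • Z ω) = gaussIso d (r • m) (r^2 * v) := by
  have h0 : (fun ω => r • Z ω) = (fun y : Fin d → ℝ => r • y) ∘ Z := rfl
  rw [h0, ← Measure.map_map (measurable_const_smul r) hZ, h, gaussIso, gaussIso,
    Measure.map_map (measurable_const_smul r) (by fun_prop)]
  congr 1
  funext x
  show r • (m + Real.sqrt v • x) = r • m + Real.sqrt (r^2 * v) • x
  rw [smul_add, smul_smul, Real.sqrt_mul (sq_nonneg r), Real.sqrt_sq hr]

/-- Change of variables reducing the multi-step DyDiff forward process to independent
single-step diffusions (Appendix A.3). The DyDiff forward process is indexed by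
`n = s + Pn` (so `n = 0` is the earliest history state `x^{-P}`, and `x^1` is index
`Pn + 1`). Define `y^1 = x^1` and `y^s = (x^s − √(1−γ̄)·x^{s−1})/√γ̄` for `1 < s ≤ S`.
Then `y^s = √ᾱ·x_0^s + √(1−ᾱ)·ε^s`, and `x^1, y^2, …, y^S` are mutually independent
Gaussians. -/
theorem multi_step_change_of_variables {Ω : Type*} [MeasurableSpace Ω] (P : Measure Ω)
    [IsProbabilityMeasure P] (d Pn S : ℕ) (hS : 1 ≤ S) (abar gbar : ℝ)
    (habar : abar ∈ Set.Ioc (0 : ℝ) 1) (hgbar : gbar ∈ Set.Ioc (0 : ℝ) 1)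
    (x0 : ℕ → Fin d → ℝ) (ε : ℕ → Ω → Fin d → ℝ)
    (hmeas : ∀ i, Measurable (ε i))
    (hind : iIndepFun ε P)
    (hgauss : ∀ i, P.map (ε i) = stdGaussian d)
    (x : ℕ → Ω → Fin d → ℝ)
    (hxbase : ∀ ω, x 0 ω = Real.sqrt abar • x0 0 + Real.sqrt (1 - abar) • ε 0 ω)
    (hxstep : ∀ n ω, x (n + 1) ω
      = Real.sqrt gbar • (Real.sqrt abar • x0 (n + 1) + Real.sqrt (1 - abar) • ε (n + 1) ω)
        + Real.sqrt (1 - gbar) • x n ω) :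
    (∀ s, 2 ≤ s → s ≤ S → ∀ ω,
        (Real.sqrt gbar)⁻¹ •
            (x (Pn + s) ω - Real.sqrt (1 - gbar) • x (Pn + s - 1) ω)
          = Real.sqrt abar • x0 (Pn + s) + Real.sqrt (1 - abar) • ε (Pn + s) ω)
      ∧ iIndepFun
          (fun i : Fin S => if i.val = 0 then x (Pn + 1) else fun ω =>
            (Real.sqrt gbar)⁻¹ •
              (x (Pn + i.val + 1) ω - Real.sqrt (1 - gbar) • x (Pn + i.val) ω)) P
      ∧ ∀ i : Fin S, ∃ m : Fin d → ℝ,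
          P.map (fun ω => if i.val = 0 then x (Pn + 1) ω else
              (Real.sqrt gbar)⁻¹ •
                (x (Pn + i.val + 1) ω - Real.sqrt (1 - gbar) • x (Pn + i.val) ω))
            = gaussIso d m (1 - abar) := by
  classical
  obtain ⟨ha0, ha1⟩ := habar
  obtain ⟨hg0, hg1⟩ := hgbar
  have hsg : Real.sqrt gbar ≠ 0 := by positivity
  have h1a : (0:ℝ) ≤ 1 - abar := by linarith
  have h1g : (0:ℝ) ≤ 1 - gbar := by linarith
  -- the basic algebraic identity
  have hstep' : ∀ n ω, (Real.sqrt gbar)⁻¹ •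
      (x (n + 1) ω - Real.sqrt (1 - gbar) • x n ω)
      = Real.sqrt abar • x0 (n + 1) + Real.sqrt (1 - abar) • ε (n + 1) ω := by
    intro n ω
    rw [hxstep n ω, add_sub_cancel_right, smul_smul, inv_mul_cancel₀ hsg, one_smul]
  -- x as a function of the noise
  have hx_eq : ∀ n ω, x n ω = Xdet d abar gbar x0 n (fun k => ε k ω) := by
    intro n
    induction n with
    | zero => intro ω; rw [hxbase ω]; rfl
    | succ n ih => intro ω; rw [hxstep n ω, ih ω]; rfl
  have hx_meas : ∀ n, Measurable (x n) := by
    intro n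
    have : x n = (Xdet d abar gbar x0 n) ∘ (fun ω k => ε k ω) := funext fun ω => hx_eq n ω
    rw [this]
    exact (Xdet_measurable d abar gbar x0 n).comp (measurable_pi_lambda _ hmeas)
  -- affine images of single noise vectors
  have haff : ∀ (n : ℕ) (m : Fin d → ℝ),
      P.map (fun ω => m + Real.sqrt (1 - abar) • ε n ω) = gaussIso d m (1 - abar) := by
    intro n m
    have h0 : (fun ω => m + Real.sqrt (1 - abar) • ε n ω)
        = (fun y : Fin d → ℝ => m + Real.sqrt (1 - abar) • y) ∘ ε n := rfl
    rw [h0, ← Measure.map_map (by fun_prop) (hmeas n), hgauss n]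
    rfl
  -- independence of x n from the next noise
  have hindep_step : ∀ n, IndepFun (x n)
      (fun ω => Real.sqrt abar • x0 (n+1) + Real.sqrt (1 - abar) • ε (n+1) ω) P := by
    intro n
    have hd : Disjoint (Finset.range (n+1)) ({n+1} : Finset ℕ) := by
      simp [Finset.disjoint_singleton_right]
    have hbase := hind.indepFun_finset (Finset.range (n+1)) ({n+1} : Finset ℕ) hd hmeas
    set F : ((_ : ↥(Finset.range (n+1))) → Fin d → ℝ) → Fin d → ℝ :=
      fun v => Xdet d abar gbar x0 n
        (fun j => if h : j ∈ Finset.range (n+1) then v ⟨j, h⟩ else default) with hF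
    set G : ((_ : ↥({n+1} : Finset ℕ)) → Fin d → ℝ) → Fin d → ℝ :=
      fun v => Real.sqrt abar • x0 (n+1)
        + Real.sqrt (1 - abar) • v ⟨n+1, Finset.mem_singleton_self _⟩ with hG
    have hFmeas : Measurable F :=
      (Xdet_measurable d abar gbar x0 n).comp (measurable_ext_fun _)
    have hGmeas : Measurable G := by
      apply Measurable.add measurable_const
      exact (measurable_const_smul _).comp (measurable_pi_apply _)
    have h1 : x n = F ∘ (fun ω (j : ↥(Finset.range (n+1))) => ε j ω) := by
      funext ω
      rw [hx_eq n ω]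
      exact Xdet_dep d abar gbar x0 n _ _
        (fun j hj => by simp [Finset.mem_range, Nat.lt_succ_of_le hj])
    have h2 : (fun ω => Real.sqrt abar • x0 (n+1) + Real.sqrt (1 - abar) • ε (n+1) ω)
        = G ∘ (fun ω (j : ↥({n+1} : Finset ℕ)) => ε j ω) := rfl
    rw [h1, h2]
    exact hbase.comp hFmeas hGmeas
  -- the law of x n
  have hxdist : ∀ n, ∃ m, P.map (x n) = gaussIso d m (1 - abar) := by
    intro n
    induction n with
    | zero =>
      refine ⟨Real.sqrt abar • x0 0, ?_⟩
      rw [show x 0 = fun ω => Real.sqrt abar • x0 0 + Real.sqrt (1 - abar) • ε 0 ω from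
        funext hxbase]
      exact haff 0 _
    | succ n ih =>
      obtain ⟨m, hm⟩ := ih
      set fresh : Ω → Fin d → ℝ :=
        fun ω => Real.sqrt abar • x0 (n+1) + Real.sqrt (1 - abar) • ε (n+1) ω with hfr
      have hfresh_meas : Measurable fresh := by
        apply Measurable.add measurable_const
        exact (measurable_const_smul _).comp (hmeas (n+1))
      have hfresh : P.map fresh = gaussIso d (Real.sqrt abar • x0 (n+1)) (1 - abar) :=
        haff (n+1) _
      have hX : P.map (fun ω => Real.sqrt (1 - gbar) • x n ω)
          = gaussIso d (Real.sqrt (1 - gbar) • m) ((Real.sqrt (1 - gbar))^2 * (1 - abar)) :=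
        map_smul_gauss P (hx_meas n) (Real.sqrt_nonneg _) h1a hm
      have hY : P.map (fun ω => Real.sqrt gbar • fresh ω)
          = gaussIso d (Real.sqrt gbar • (Real.sqrt abar • x0 (n+1)))
            ((Real.sqrt gbar)^2 * (1 - abar)) :=
        map_smul_gauss P hfresh_meas (Real.sqrt_nonneg _) h1a hfresh
      have hI : IndepFun (fun ω => Real.sqrt (1 - gbar) • x n ω)
          (fun ω => Real.sqrt gbar • fresh ω) P :=
        (hindep_step n).comp (measurable_const_smul _) (measurable_const_smul _)
      have hsum := map_add_gauss P
        (((measurable_const_smul _).comp (hx_meas n) :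
          Measurable fun ω => Real.sqrt (1 - gbar) • x n ω))
        (((measurable_const_smul _).comp hfresh_meas :
          Measurable fun ω => Real.sqrt gbar • fresh ω))
        hI (by positivity) (by positivity) hX hY
      refine ⟨Real.sqrt (1 - gbar) • m + Real.sqrt gbar • (Real.sqrt abar • x0 (n+1)), ?_⟩
      have hxe : x (n+1) = fun ω => (Real.sqrt (1 - gbar) • x n ω) + (Real.sqrt gbar • fresh ω) := by
        funext ω
        rw [hxstep n ω, hfr, add_comm]
      have hfinal : P.map (x (n+1)) = gaussIso d
          (Real.sqrt (1 - gbar) • m + Real.sqrt gbar • (Real.sqrt abar • x0 (n+1)))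
          ((Real.sqrt (1 - gbar))^2 * (1 - abar) + (Real.sqrt gbar)^2 * (1 - abar)) := by
        rw [hxe]; exact hsum
      rw [hfinal]
      congr 1
      rw [Real.sq_sqrt h1g, Real.sq_sqrt (le_of_lt hg0)]
      ring
  -- block structure for independence
  set Bk : Fin S → Finset ℕ :=
    fun k => if k.val = 0 then Finset.range (Pn+2) else {Pn + k.val + 1} with hBk
  set G : Fin S → (ℕ → Fin d → ℝ) → Fin d → ℝ :=
    fun k e => if k.val = 0 then Xdet d abar gbar x0 (Pn+1) e
      else Real.sqrt abar • x0 (Pn + k.val + 1) + Real.sqrt (1 - abar) • e (Pn + k.val + 1)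
    with hGdef
  have hGmeas : ∀ k, Measurable (G k) := by
    intro k
    by_cases h : k.val = 0 <;> simp only [hGdef, h, if_true, if_false]
    · exact Xdet_measurable d abar gbar x0 (Pn+1)
    · exact measurable_const.add ((measurable_const_smul _).comp (measurable_pi_apply _))
  have hBdisj : Pairwise (Function.onFun Disjoint Bk) := by
    intro i j hij
    simp only [Function.onFun, hBk]
    by_cases hi : i.val = 0 <;> by_cases hj : j.val = 0 <;>
      simp only [hi, hj, if_true, if_false]
    · exact absurd (Fin.ext (hi.trans hj.symm)) hij
    · rw [Finset.disjoint_singleton_right]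
      simp only [Finset.mem_range]
      omega
    · rw [Finset.disjoint_singleton_left]
      simp only [Finset.mem_range]
      omega
    · rw [Finset.disjoint_singleton_right, Finset.mem_singleton]
      intro hc
      exact hij (Fin.ext (by omega))
  have hGdep : ∀ k (e e' : ℕ → Fin d → ℝ), (∀ j ∈ Bk k, e j = e' j) → G k e = G k e' := by
    intro k e e' he
    by_cases h : k.val = 0 <;> simp only [hGdef, h, if_true, if_false]
    · exact Xdet_dep d abar gbar x0 (Pn+1) e e'
        (fun j hj => he j (by simp [hBk, h, Finset.mem_range]; omega))
    · rw [he (Pn + k.val + 1) (by simp [hBk, h])]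
  have hblocks := iIndepFun_blocks P ε hmeas hind Bk hBdisj G hGmeas hGdep
  have hfam : (fun i : Fin S => if i.val = 0 then x (Pn + 1) else fun ω =>
        (Real.sqrt gbar)⁻¹ •
          (x (Pn + i.val + 1) ω - Real.sqrt (1 - gbar) • x (Pn + i.val) ω))
      = fun k ω => G k (fun j => ε j ω) := by
    funext k
    by_cases h : k.val = 0 <;> simp only [h, if_true, if_false, hGdef]
    · funext ω
      exact hx_eq (Pn + 1) ω
    · funext ω
      exact hstep' (Pn + k.val) ω
  refine ⟨?_, ?_, ?_⟩
  · intro s hs2 _hsS ω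
    have h1 : Pn + s = (Pn + s - 1) + 1 := by omega
    rw [h1]
    have h2 : Pn + s - 1 + 1 - 1 = Pn + s - 1 := by omega
    rw [h2]
    exact hstep' (Pn + s - 1) ω
  · rw [hfam]
    exact hblocks
  · intro i
    by_cases h : i.val = 0
    · simp only [h, if_true]
      exact hxdist (Pn + 1)
    · simp only [h, if_false]
      refine ⟨Real.sqrt abar • x0 (Pn + i.val + 1), ?_⟩
      rw [show (fun ω => (Real.sqrt gbar)⁻¹ •
          (x (Pn + i.val + 1) ω - Real.sqrt (1 - gbar) • x (Pn + i.val) ω))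
        = fun ω => Real.sqrt abar • x0 (Pn + i.val + 1) + Real.sqrt (1 - abar) • ε (Pn + i.val + 1) ω
        from funext fun ω => hstep' (Pn + i.val) ω]
      exact haff (Pn + i.val + 1) _
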